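/- For any positive semidefinite σ and any Hermitian H with support contained in the support of σ, one has ‖H‖₁ ≤ ‖H‖_{B,σ} · √(Tr σ), where ‖H‖_{B,σ} = √(Tr H J_σ⁻¹(H)) is the Bures (semi)norm. -/

import Mathlib

/-!
Let `U` be the sign of `H`, a Hermitian unitary with `U H = |H|`, so that `‖H‖₁ = Re Tr (U H)`.
Since `2 H = σ Z + Z σ` and `U`, `Z`, `σ` are Hermitian, `Re Tr (U H) = Re Tr (U σ Z)`.
Cauchy–Schwarz for the semi-inner product `⟪X, Y⟫ = Tr (Y σ Xᴴ)` then bounds `|Tr (U σ Z)|` by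
`√Tr (Z σ Z) · √Tr (U σ U) = √Tr (H Z) · √Tr σ`.
-/

open Matrix
open scoped ComplexOrder

/-- The Schatten 1-norm (trace norm) of a complex matrix: `Tr √(XᴴX)`. -/
noncomputable def traceNorm {n : Type*} [Fintype n] [DecidableEq n] (X : Matrix n n ℂ) : ℝ :=
  (((Matrix.posSemidef_conjTranspose_mul_self X).1.eigenvectorUnitary : Matrix n n ℂ) *
    diagonal (((↑) : ℝ → ℂ) ∘ (√·) ∘ (Matrix.posSemidef_conjTranspose_mul_self X).1.eigenvalues) *
    (star (Matrix.posSemidef_conjTranspose_mul_self X).1.eigenvectorUnitary : Matrix n n ℂ)).trace.re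

namespace Matrix

variable {n 𝕜 : Type*} [Fintype n] [RCLike 𝕜]

lemma PosSemidef.norm_trace_mul_mul_conjTranspose_le {M : Matrix n n 𝕜} (hM : M.PosSemidef)
    (x y : Matrix n n 𝕜) :
    ‖(y * M * xᴴ).trace‖ ≤
      √(RCLike.re (x * M * xᴴ).trace) * √(RCLike.re (y * M * yᴴ).trace) := by
  let := M.toMatrixSeminormedAddCommGroup hM
  let := M.toMatrixInnerProductSpace hM
  have h := norm_inner_le_norm (𝕜 := 𝕜) x y
  rwa [norm_eq_sqrt_re_inner (𝕜 := 𝕜) x, norm_eq_sqrt_re_inner (𝕜 := 𝕜) y] at h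

variable [DecidableEq n]

lemma re_trace_mul_le_sqrt_mul_sqrt {σ H Z U : Matrix n n 𝕜} (hσ : σ.PosSemidef)
    (hZ : Z.IsHermitian) (hJZ : σ * Z + Z * σ = (2 : 𝕜) • H) (hU : U.IsHermitian)
    (hUU : U * U = 1) :
    RCLike.re (U * H).trace ≤ √(RCLike.re (H * Z).trace) * √(RCLike.re σ.trace) := by
  have hUH : RCLike.re (U * H).trace = RCLike.re (U * σ * Z).trace := by
    have hstar : (U * Z * σ).trace = star (U * σ * Z).trace := by
      rw [← trace_conjTranspose, conjTranspose_mul, conjTranspose_mul, hZ.eq, hσ.1.eq, hU.eq,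
        ← Matrix.mul_assoc, trace_mul_cycle Z σ U]
    have h := congr(RCLike.re (U * $hJZ).trace)
    rw [Matrix.mul_add, ← Matrix.mul_assoc, ← Matrix.mul_assoc, trace_add, hstar, Matrix.mul_smul,
      trace_smul, map_add, RCLike.star_def, RCLike.conj_re, smul_eq_mul, RCLike.ofNat_mul_re] at h
    linarith
  have hZσZ : (Z * σ * Zᴴ).trace = (H * Z).trace := by
    have h := congr(($hJZ * Z).trace)
    rw [Matrix.add_mul, trace_add, trace_mul_cycle σ Z Z, Matrix.smul_mul, trace_smul,
      smul_eq_mul, ← two_mul] at h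
    rw [hZ.eq]
    exact mul_left_cancel₀ two_ne_zero h
  have hUσU : (U * σ * Uᴴ).trace = σ.trace := by
    rw [hU.eq, trace_mul_cycle, hUU, Matrix.one_mul]
  calc RCLike.re (U * H).trace = RCLike.re (U * σ * Zᴴ).trace := by rw [hUH, hZ.eq]
    _ ≤ ‖(U * σ * Zᴴ).trace‖ := RCLike.re_le_norm _
    _ ≤ √(RCLike.re (H * Z).trace) * √(RCLike.re σ.trace) := by
      simpa only [hZσZ, hUσU] using hσ.norm_trace_mul_mul_conjTranspose_le Z U

lemma traceNorm_eq_re_trace_cfc_sqrt (X : Matrix n n ℂ) :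
    traceNorm X = (cfc Real.sqrt (Xᴴ * X)).trace.re := by
  rw [(posSemidef_conjTranspose_mul_self X).1.cfc_eq]
  rfl

lemma IsHermitian.traceNorm_eq_re_trace_cfc_abs {H : Matrix n n ℂ} (hH : H.IsHermitian) :
    traceNorm H = (cfc (fun x : ℝ ↦ |x|) H).trace.re := by
  have hsq : Hᴴ * H = cfc (fun x : ℝ ↦ x * x) H := by
    rw [hH.eq, cfc_mul _ _ H, cfc_id' ℝ H]
  rw [traceNorm_eq_re_trace_cfc_sqrt, hsq, ← cfc_comp' Real.sqrt _ H]
  simp only [Real.sqrt_mul_self_eq_abs]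

lemma IsHermitian.exists_traceNorm_eq_re_trace_mul {H : Matrix n n ℂ} (hH : H.IsHermitian) :
    ∃ U : Matrix n n ℂ, U.IsHermitian ∧ U * U = 1 ∧ traceNorm H = (U * H).trace.re := by
  let s : ℝ → ℝ := fun x ↦ if x < 0 then -1 else 1
  have hs : ContinuousOn s (spectrum ℝ H) := H.finite_real_spectrum.continuousOn s
  refine ⟨cfc s H, cfc_predicate s H, ?_, ?_⟩
  · rw [← cfc_mul s s H, ← cfc_one ℝ H]
    refine cfc_congr fun x _ ↦ ?_
    by_cases hx : x < 0 <;> simp [s, hx]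
  · have hsH : cfc s H * H = cfc (fun x : ℝ ↦ |x|) H := by
      conv_lhs => arg 2; rw [← cfc_id' ℝ H]
      rw [← cfc_mul s _ H]
      refine cfc_congr fun x _ ↦ ?_
      rcases lt_or_ge x 0 with hx | hx
      · simp [s, hx, abs_of_neg hx]
      · simp [s, hx.not_gt, abs_of_nonneg hx]
    rw [hsH, hH.traceNorm_eq_re_trace_cfc_abs]

end Matrix

/-- `Z` is a Hermitian solution of `J_σ(Z) = H`, so `Tr (H Z) = Tr (H J_σ⁻¹(H)) = ‖H‖²_{B,σ}`. -/
theorem traceNorm_le_buresNorm_mul_sqrt_trace_general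
    {n : Type*} [Fintype n] [DecidableEq n] (σ H : Matrix n n ℂ)
    (hσ : σ.PosSemidef) (hH : H.IsHermitian)
    (Z : Matrix n n ℂ) (hZ : Z.IsHermitian) (hJZ : σ * Z + Z * σ = (2 : ℂ) • H) :
    traceNorm H ≤ Real.sqrt (((H * Z).trace).re) * Real.sqrt ((σ.trace).re) := by
  obtain ⟨U, hU, hUU, hnorm⟩ := hH.exists_traceNorm_eq_re_trace_mul
  rw [hnorm]
  exact re_trace_mul_le_sqrt_mul_sqrt hσ hZ hJZ hU hUU

/-- For positive semidefinite `σ` and Hermitian `H` supported on `supp σ`,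
`‖H‖₁ ≤ ‖H‖_{B,σ} √(Tr σ)`, where the Bures (semi)norm is expressed through any Hermitian
witness `Z` of the membership of `H` in the range of `J_σ`, i.e. `(σZ + Zσ)/2 = H`,
so that `‖H‖_{B,σ}² = Tr (H J_σ⁻¹(H)) = Tr (H Z)`. -/
theorem traceNorm_le_buresNorm_mul_sqrt_trace
    {n : Type*} [Fintype n] [DecidableEq n] (σ H : Matrix n n ℂ)
    (hσ : σ.PosSemidef) (hH : H.IsHermitian)
    (hsupp : ∀ v : n → ℂ, σ *ᵥ v = 0 → H *ᵥ v = 0)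
    (Z : Matrix n n ℂ) (hZ : Z.IsHermitian) (hJZ : σ * Z + Z * σ = (2 : ℂ) • H) :
    traceNorm H ≤ Real.sqrt (((H * Z).trace).re) * Real.sqrt ((σ.trace).re) :=
  traceNorm_le_buresNorm_mul_sqrt_trace_general σ H hσ hH Z hZ hJZ
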